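/- Let q ∈ (1,2], T > 0, P ≥ 0, and let Φ be the set of all functions φ : [0,T] → ℝⁿ of the form φ(t) = (1/Γ(q)) ∫₀^t (t−τ)^{q−1} f(τ) dτ − (t/(Γ(q)T)) ∫₀^T (T−τ)^{q−1} f(τ) dτ where f ranges over measurable functions with ‖f(τ)‖ ≤ P a.e. Then Φ is uniformly bounded (by 2PT^q/Γ(q+1)) and uniformly equicontinuous on [0,T]; hence Φ is relatively compact in C([0,T], ℝⁿ). -/

import Mathlib

/-!
Write `I(t) = ∫₀ᵗ (t - τ)^(q-1) f(τ) dτ`, so that `φ(t) = (I(t) - (t/T) I(T)) / Γ(q)`.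
The bound `‖f‖ ≤ P` gives `‖I(t)‖ ≤ P tᵠ/q`. For `s ≤ t`, split `I(t) - I(s)` into the integral
over `[0, s]` of the kernel difference, which is nonnegative because `q ≥ 1`, and the integral over
`[s, t]`: the two bounds add up to `P (tᵠ - sᵠ)/q ≤ P T^(q-1) (t - s)`. Hence every `φ` is
Lipschitz with the common constant `2 P T^(q-1) / Γ(q)`, and a uniformly bounded, uniformly
Lipschitz family has compact closure by Arzelà–Ascoli.
-/

open MeasureTheory Real

open Set
open scoped NNReal

theorem integral_sub_rpow_sub_one {q : ℝ} (hq : 0 < q) (a b c : ℝ) :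
    ∫ τ in a..b, (c - τ) ^ (q - 1) = ((c - a) ^ q - (c - b) ^ q) / q := by
  rw [intervalIntegral.integral_comp_sub_left (fun x => x ^ (q - 1)) c,
    integral_rpow (Or.inl (by linarith)), sub_add_cancel]

theorem continuous_sub_rpow (c : ℝ) {r : ℝ} (hr : 0 ≤ r) : Continuous fun τ : ℝ => (c - τ) ^ r :=
  (continuous_const.sub continuous_id).rpow_const fun _ => Or.inr hr

theorem rpow_sub_rpow_le_mul {q s t T : ℝ} (hq : 1 ≤ q) (hs : 0 ≤ s) (hst : s ≤ t) (htT : t ≤ T) :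
    t ^ q - s ^ q ≤ q * T ^ (q - 1) * (t - s) := by
  have hderiv : ∀ x ∈ Icc s t, HasDerivWithinAt (· ^ q) (q * x ^ (q - 1)) (Icc s t) x :=
    fun x _ => (hasDerivAt_rpow_const (Or.inr hq)).hasDerivWithinAt
  have hbound : ∀ x ∈ Icc s t, ‖q * x ^ (q - 1)‖ ≤ q * T ^ (q - 1) := by
    intro x hx
    have hx0 : 0 ≤ x := hs.trans hx.1
    rw [norm_of_nonneg (by positivity)]
    gcongr
    exact hx.2.trans htT
  have := (convex_Icc s t).norm_image_sub_le_of_norm_hasDerivWithin_le hderiv hbound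
    (left_mem_Icc.2 hst) (right_mem_Icc.2 hst)
  rw [Real.norm_eq_abs, Real.norm_eq_abs, abs_of_nonneg (sub_nonneg.2 hst)] at this
  exact (le_abs_self _).trans this

theorem norm_intervalIntegral_smul_le {E : Type*} [NormedAddCommGroup E] [NormedSpace ℝ E]
    {f : ℝ → E} {k : ℝ → ℝ} {a b P : ℝ} (hab : a ≤ b) (hk : IntervalIntegrable k volume a b)
    (hk0 : ∀ τ ∈ Ioc a b, 0 ≤ k τ) (hf : ∀ᵐ τ ∂volume.restrict (Ioc a b), ‖f τ‖ ≤ P) :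
    ‖∫ τ in a..b, k τ • f τ‖ ≤ P * ∫ τ in a..b, k τ := by
  rw [← intervalIntegral.integral_const_mul]
  refine intervalIntegral.norm_integral_le_of_norm_le hab ?_ (hk.const_mul P)
  rw [← ae_restrict_iff' measurableSet_Ioc]
  filter_upwards [hf, ae_restrict_mem measurableSet_Ioc] with τ hfτ hτ
  rw [norm_smul, norm_of_nonneg (hk0 τ hτ), mul_comm]
  exact mul_le_mul_of_nonneg_right hfτ (hk0 τ hτ)

theorem ae_norm_le_of_Ioc_subset {E : Type*} [NormedAddCommGroup E] {f : ℝ → E} {T P : ℝ}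
    (hb : ∀ᵐ τ ∂volume.restrict (Icc 0 T), ‖f τ‖ ≤ P) {s t : ℝ} (hs : 0 ≤ s) (htT : t ≤ T) :
    ∀ᵐ τ ∂volume.restrict (Ioc s t), ‖f τ‖ ≤ P :=
  ae_restrict_of_ae_restrict_of_subset (Ioc_subset_Icc_self.trans (Icc_subset_Icc hs htT)) hb

section KernelIntegral

variable {E : Type*} [NormedAddCommGroup E] [NormedSpace ℝ E] {q T P : ℝ} {f : ℝ → E}

/-- `Γ(q)` times the Riemann–Liouville integral of order `q` of `f`, based at `0`. -/
noncomputable def kernelIntegral (q : ℝ) (f : ℝ → E) (t : ℝ) : E :=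
  ∫ τ in 0..t, (t - τ) ^ (q - 1) • f τ

theorem intervalIntegrable_sub_rpow_smul (hq : 1 ≤ q) (hfi : IntegrableOn f (Icc 0 T))
    {a b : ℝ} (ha : a ∈ Icc 0 T) (hb : b ∈ Icc 0 T) (c : ℝ) :
    IntervalIntegrable (fun τ => (c - τ) ^ (q - 1) • f τ) volume a b :=
  ((hfi.continuousOn_smul (continuous_sub_rpow c (sub_nonneg.2 hq)).continuousOn
    isCompact_Icc).mono_set (uIcc_subset_Icc ha hb)).intervalIntegrable

theorem norm_kernelIntegral_le (hq : 1 ≤ q) (hb : ∀ᵐ τ ∂volume.restrict (Icc 0 T), ‖f τ‖ ≤ P)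
    {t : ℝ} (ht : 0 ≤ t) (htT : t ≤ T) :
    ‖kernelIntegral q f t‖ ≤ P * t ^ q / q := by
  have hker := norm_intervalIntegral_smul_le (f := f) ht
    ((continuous_sub_rpow t (sub_nonneg.2 hq)).intervalIntegrable 0 t)
    (fun τ hτ => rpow_nonneg (sub_nonneg.2 hτ.2) _) (ae_norm_le_of_Ioc_subset hb le_rfl htT)
  rwa [integral_sub_rpow_sub_one (by linarith), sub_zero, sub_self,
    Real.zero_rpow (by linarith), sub_zero, ← mul_div_assoc] at hker

theorem norm_kernelIntegral_sub_le (hq : 1 ≤ q) (hfi : IntegrableOn f (Icc 0 T))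
    (hb : ∀ᵐ τ ∂volume.restrict (Icc 0 T), ‖f τ‖ ≤ P)
    {s t : ℝ} (hs : 0 ≤ s) (hst : s ≤ t) (htT : t ≤ T) :
    ‖kernelIntegral q f t - kernelIntegral q f s‖ ≤ P * (t ^ q - s ^ q) / q := by
  have hq0 : 0 < q := by linarith
  have h0 : (0 : ℝ) ∈ Icc 0 T := ⟨le_rfl, hs.trans (hst.trans htT)⟩
  have hsI : s ∈ Icc 0 T := ⟨hs, hst.trans htT⟩
  have htI : t ∈ Icc 0 T := ⟨hs.trans hst, htT⟩
  have hsplit : kernelIntegral q f t - kernelIntegral q f s =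
      (∫ τ in 0..s, ((t - τ) ^ (q - 1) - (s - τ) ^ (q - 1)) • f τ)
        + ∫ τ in s..t, (t - τ) ^ (q - 1) • f τ := by
    simp only [kernelIntegral, sub_smul]
    rw [← intervalIntegral.integral_add_adjacent_intervals
        (intervalIntegrable_sub_rpow_smul hq hfi h0 hsI t)
        (intervalIntegrable_sub_rpow_smul hq hfi hsI htI t),
      intervalIntegral.integral_sub (intervalIntegrable_sub_rpow_smul hq hfi h0 hsI t)
        (intervalIntegrable_sub_rpow_smul hq hfi h0 hsI s)]
    abel
  have hcont : ∀ c, Continuous fun τ : ℝ => (c - τ) ^ (q - 1) :=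
    fun c => continuous_sub_rpow c (sub_nonneg.2 hq)
  have hnear := norm_intervalIntegral_smul_le (f := f)
    (k := fun τ => (t - τ) ^ (q - 1) - (s - τ) ^ (q - 1)) hs
    (((hcont t).sub (hcont s)).intervalIntegrable 0 s)
    (fun τ hτ => sub_nonneg.2 (rpow_le_rpow (sub_nonneg.2 hτ.2) (by linarith) (by linarith)))
    (ae_norm_le_of_Ioc_subset hb le_rfl (hst.trans htT))
  have hfar := norm_intervalIntegral_smul_le (f := f) hst ((hcont t).intervalIntegrable s t)
    (fun τ hτ => rpow_nonneg (sub_nonneg.2 hτ.2) _) (ae_norm_le_of_Ioc_subset hb hs htT)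
  rw [intervalIntegral.integral_sub ((hcont t).intervalIntegrable 0 s)
    ((hcont s).intervalIntegrable 0 s)] at hnear
  simp only [integral_sub_rpow_sub_one hq0, sub_zero, sub_self, Real.zero_rpow hq0.ne'] at hnear hfar
  calc ‖kernelIntegral q f t - kernelIntegral q f s‖
      ≤ P * ((t ^ q - (t - s) ^ q) / q - s ^ q / q) + P * ((t - s) ^ q / q) :=
        hsplit ▸ (norm_add_le _ _).trans (add_le_add hnear hfar)
    _ = P * (t ^ q - s ^ q) / q := by ring

end KernelIntegral

theorem ContinuousMap.isCompact_closure_of_norm_le_of_lipschitzWith {X E : Type*}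
    [PseudoMetricSpace X] [NormedAddCommGroup E] [ProperSpace E] {Φ : Set C(X, E)} {M : ℝ}
    {L : ℝ≥0} (hbd : ∀ φ ∈ Φ, ∀ x, ‖φ x‖ ≤ M) (hlip : ∀ φ ∈ Φ, LipschitzWith L φ) :
    IsCompact (closure Φ) := by
  set S : Set C(X, E) := {ψ | (∀ x, ‖ψ x‖ ≤ M) ∧ LipschitzWith L ψ}
  have hS : IsCompact S := by
    refine ArzelaAscoli.isCompact_of_equicontinuous S ?_
      (LipschitzWith.uniformEquicontinuous _ L fun ψ => ψ.2.2).equicontinuous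
    have himage : ContinuousMap.toFun '' S =
        (univ.pi fun _ => Metric.closedBall 0 M) ∩ {g | LipschitzWith L g} := by
      ext g
      simp only [mem_image, mem_inter_iff, mem_univ_pi, Metric.mem_closedBall, dist_zero_right,
        mem_ofPred_eq]
      constructor
      · rintro ⟨ψ, hψ, rfl⟩
        exact hψ
      · rintro hg
        exact ⟨⟨g, hg.2.continuous⟩, hg, rfl⟩
    rw [himage]
    exact (isCompact_univ_pi fun _ => isCompact_closedBall 0 M).inter_right
      (isClosed_setOfPred_lipschitzWith L)
  exact hS.of_isClosed_subset isClosed_closure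
    (closure_minimal (fun φ hφ => ⟨hbd φ hφ, hlip φ hφ⟩) hS.isClosed)

section DirichletSolution

variable {E : Type*} [NormedAddCommGroup E] [NormedSpace ℝ E] {q T P : ℝ} {f : ℝ → E}

/-- The solution `u` of `ᶜDᵠ u = f`, `u 0 = u T = 0` (Caputo derivative, `1 < q ≤ 2`). -/
noncomputable def dirichletSolution (q T : ℝ) (f : ℝ → E) (t : ℝ) : E :=
  (1 / Gamma q) • kernelIntegral q f t - (t / (Gamma q * T)) • kernelIntegral q f T

theorem norm_dirichletSolution_le (hq : 1 ≤ q) (hT : 0 < T) (hP : 0 ≤ P)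
    (hb : ∀ᵐ τ ∂volume.restrict (Icc 0 T), ‖f τ‖ ≤ P) {t : ℝ} (ht : 0 ≤ t) (htT : t ≤ T) :
    ‖dirichletSolution q T f t‖ ≤ 2 * P * T ^ q / Gamma (q + 1) := by
  have hq0 : 0 < q := by linarith
  have hG : 0 < Gamma q := Gamma_pos_of_pos hq0
  have hKt : ‖kernelIntegral q f t‖ ≤ P * T ^ q / q :=
    (norm_kernelIntegral_le hq hb ht htT).trans (by gcongr)
  have hKT : ‖kernelIntegral q f T‖ ≤ P * T ^ q / q := norm_kernelIntegral_le hq hb hT.le le_rfl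
  have hratio : t / (Gamma q * T) ≤ 1 / Gamma q := by
    rw [div_le_div_iff₀ (by positivity) hG]
    nlinarith
  calc ‖dirichletSolution q T f t‖
      ≤ 1 / Gamma q * ‖kernelIntegral q f t‖ + t / (Gamma q * T) * ‖kernelIntegral q f T‖ := by
        refine (norm_sub_le _ _).trans_eq ?_
        rw [norm_smul, norm_smul, norm_of_nonneg (by positivity), norm_of_nonneg (by positivity)]
    _ ≤ 1 / Gamma q * (P * T ^ q / q) + 1 / Gamma q * (P * T ^ q / q) := by gcongr
    _ = 2 * P * T ^ q / Gamma (q + 1) := by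
        rw [Gamma_add_one hq0.ne']
        field_simp
        ring

theorem norm_dirichletSolution_sub_le (hq : 1 ≤ q) (hT : 0 < T) (hP : 0 ≤ P)
    (hfi : IntegrableOn f (Icc 0 T)) (hb : ∀ᵐ τ ∂volume.restrict (Icc 0 T), ‖f τ‖ ≤ P)
    {s t : ℝ} (hs : 0 ≤ s) (hst : s ≤ t) (htT : t ≤ T) :
    ‖dirichletSolution q T f t - dirichletSolution q T f s‖
      ≤ 2 * P * T ^ (q - 1) / Gamma q * (t - s) := by
  have hq0 : 0 < q := by linarith
  have hG : 0 < Gamma q := Gamma_pos_of_pos hq0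
  have hKts : ‖kernelIntegral q f t - kernelIntegral q f s‖ ≤ P * T ^ (q - 1) * (t - s) := by
    refine (norm_kernelIntegral_sub_le hq hfi hb hs hst htT).trans ?_
    rw [div_le_iff₀ hq0]
    nlinarith [mul_le_mul_of_nonneg_left (rpow_sub_rpow_le_mul hq hs hst htT) hP]
  have hKT : ‖kernelIntegral q f T‖ ≤ P * T ^ (q - 1) * T := by
    refine (norm_kernelIntegral_le hq hb hT.le le_rfl).trans ?_
    rw [mul_assoc, ← rpow_add_one hT.ne', sub_add_cancel]
    exact div_le_self (by positivity) hq
  have hdiff : dirichletSolution q T f t - dirichletSolution q T f s =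
      (1 / Gamma q) • (kernelIntegral q f t - kernelIntegral q f s)
        - ((t - s) / (Gamma q * T)) • kernelIntegral q f T := by
    simp only [dirichletSolution, smul_sub, sub_div, sub_smul]
    abel
  have hts : 0 ≤ (t - s) / (Gamma q * T) := div_nonneg (by linarith) (by positivity)
  calc ‖dirichletSolution q T f t - dirichletSolution q T f s‖
      ≤ 1 / Gamma q * ‖kernelIntegral q f t - kernelIntegral q f s‖
        + (t - s) / (Gamma q * T) * ‖kernelIntegral q f T‖ := by
        rw [hdiff]
        refine (norm_sub_le _ _).trans_eq ?_
        rw [norm_smul, norm_smul, norm_of_nonneg (by positivity), norm_of_nonneg hts]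
    _ ≤ 1 / Gamma q * (P * T ^ (q - 1) * (t - s))
        + (t - s) / (Gamma q * T) * (P * T ^ (q - 1) * T) := by gcongr
    _ = 2 * P * T ^ (q - 1) / Gamma q * (t - s) := by
        field_simp
        ring

theorem lipschitzOnWith_dirichletSolution (hq : 1 ≤ q) (hT : 0 < T) (hP : 0 ≤ P)
    (hfi : IntegrableOn f (Icc 0 T)) (hb : ∀ᵐ τ ∂volume.restrict (Icc 0 T), ‖f τ‖ ≤ P) :
    LipschitzOnWith (Real.toNNReal (2 * P * T ^ (q - 1) / Gamma q))
      (dirichletSolution q T f) (Icc 0 T) := by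
  refine LipschitzOnWith.of_dist_le' fun t ht s hs => ?_
  wlog hst : s ≤ t generalizing s t
  · rw [dist_comm, dist_comm t]
    exact this s hs t ht (le_of_not_ge hst)
  rw [dist_eq_norm, Real.dist_eq, abs_of_nonneg (sub_nonneg.2 hst)]
  exact norm_dirichletSolution_sub_le hq hT hP hfi hb hs.1 hst ht.2

end DirichletSolution

theorem stmt_12_general {n : ℕ} (q T P : ℝ) (hq1 : 1 < q) (hT : 0 < T) (hP : 0 ≤ P)
    (Φ : Set C(Set.Icc (0:ℝ) T, EuclideanSpace ℝ (Fin n)))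
    (hΦ : Φ = {φ | ∃ f : ℝ → EuclideanSpace ℝ (Fin n), Measurable f ∧
      (∀ᵐ τ ∂(volume.restrict (Set.Icc 0 T)), ‖f τ‖ ≤ P) ∧
      ∀ t : Set.Icc (0:ℝ) T,
        φ t = (1 / Real.Gamma q) • (∫ τ in (0:ℝ)..(t:ℝ), ((t:ℝ) - τ) ^ (q - 1) • f τ)
          - ((t:ℝ) / (Real.Gamma q * T)) • (∫ τ in (0:ℝ)..T, (T - τ) ^ (q - 1) • f τ)}) :
    (∀ φ ∈ Φ, ∀ t : Set.Icc (0:ℝ) T, ‖φ t‖ ≤ 2 * P * T ^ q / Real.Gamma (q + 1)) ∧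
    Equicontinuous (fun φ : Φ => ((φ : C(Set.Icc (0:ℝ) T, EuclideanSpace ℝ (Fin n))) :
      Set.Icc (0:ℝ) T → EuclideanSpace ℝ (Fin n))) ∧
    IsCompact (closure Φ) := by
  set L := Real.toNNReal (2 * P * T ^ (q - 1) / Gamma q)
  have hΦ_bound_lip : ∀ φ ∈ Φ,
      (∀ t, ‖φ t‖ ≤ 2 * P * T ^ q / Gamma (q + 1)) ∧ LipschitzWith L φ := by
    intro φ hφ
    rw [hΦ] at hφ
    obtain ⟨f, hf, hb, hφf⟩ := hφ
    have hfi : IntegrableOn f (Icc 0 T) :=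
      Measure.integrableOn_of_bounded measure_Icc_lt_top.ne hf.aestronglyMeasurable hb
    have hφu : ⇑φ = (Icc 0 T).domRestrict (dirichletSolution q T f) := funext hφf
    rw [hφu]
    exact ⟨fun t => norm_dirichletSolution_le hq1.le hT hP hb t.2.1 t.2.2,
      (lipschitzOnWith_dirichletSolution hq1.le hT hP hfi hb).to_restrict⟩
  exact ⟨fun φ hφ => (hΦ_bound_lip φ hφ).1,
    (LipschitzWith.uniformEquicontinuous _ L fun φ : Φ => (hΦ_bound_lip φ φ.prop).2).equicontinuous,
    ContinuousMap.isCompact_closure_of_norm_le_of_lipschitzWith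
      (fun φ hφ => (hΦ_bound_lip φ hφ).1) (fun φ hφ => (hΦ_bound_lip φ hφ).2)⟩

theorem stmt_12 {n : ℕ} (q T P : ℝ) (hq1 : 1 < q) (hq2 : q ≤ 2) (hT : 0 < T) (hP : 0 ≤ P)
    (Φ : Set C(Set.Icc (0:ℝ) T, EuclideanSpace ℝ (Fin n)))
    (hΦ : Φ = {φ | ∃ f : ℝ → EuclideanSpace ℝ (Fin n), Measurable f ∧
      (∀ᵐ τ ∂(volume.restrict (Set.Icc 0 T)), ‖f τ‖ ≤ P) ∧
      ∀ t : Set.Icc (0:ℝ) T,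
        φ t = (1 / Real.Gamma q) • (∫ τ in (0:ℝ)..(t:ℝ), ((t:ℝ) - τ) ^ (q - 1) • f τ)
          - ((t:ℝ) / (Real.Gamma q * T)) • (∫ τ in (0:ℝ)..T, (T - τ) ^ (q - 1) • f τ)}) :
    (∀ φ ∈ Φ, ∀ t : Set.Icc (0:ℝ) T, ‖φ t‖ ≤ 2 * P * T ^ q / Real.Gamma (q + 1)) ∧
    Equicontinuous (fun φ : Φ => ((φ : C(Set.Icc (0:ℝ) T, EuclideanSpace ℝ (Fin n))) :
      Set.Icc (0:ℝ) T → EuclideanSpace ℝ (Fin n))) ∧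
    IsCompact (closure Φ) :=
  stmt_12_general q T P hq1 hT hP Φ hΦ
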